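/- Let m be a positive integer and let B = B₁ ∪ B₂ ∪ B₃ ∪ B₄ be a set of 4m points in the plane in general position, where B₁, B₂, B₃, B₄ are pairwise disjoint sets with |B₁| = |B₂| = |B₃| = |B₄| = m, such that for every choice of points p₁ ∈ B₁, p₂ ∈ B₂, p₃ ∈ B₃, p₄ ∈ B₄, the point p₄ lies in the convex hull of {p₁, p₂, p₃}. Then the edge set of the complete geometric graph induced by B can be partitioned into at most 3m plane subgraphs, each of which is a plane star forest consisting of at most two stars. -/

import Mathlib

noncomputable section

/-- Points live in the Euclidean plane. -/
abbrev Pt := EuclideanSpace ℝ (Fin 2)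

/-- A set of points is in general position if no three of its points are collinear. -/
def GenPos (A : Set Pt) : Prop :=
  ∀ p ∈ A, ∀ q ∈ A, ∀ r ∈ A, p ≠ q → p ≠ r → q ≠ r → ¬ Collinear ℝ ({p, q, r} : Set Pt)

/-- The edge set of the complete geometric graph induced by `A`: all unordered pairs
of distinct points of `A`. -/
def edges (A : Set Pt) : Set (Sym2 Pt) :=
  {e | ∃ a ∈ A, ∃ b ∈ A, a ≠ b ∧ e = s(a, b)}

/-- Two edges cross if they share no endpoint and their relative interiors
(open segments) have a common point. -/
def Cross (e f : Sym2 Pt) : Prop :=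
  ∃ a b c d : Pt, e = s(a, b) ∧ f = s(c, d) ∧
    a ≠ c ∧ a ≠ d ∧ b ≠ c ∧ b ≠ d ∧
    (openSegment ℝ a b ∩ openSegment ℝ c d).Nonempty

/-- A set of edges is plane if no two of its edges cross. -/
def PlaneEdges (E : Set (Sym2 Pt)) : Prop := ∀ e ∈ E, ∀ f ∈ E, ¬ Cross e f

/-- `F` is a partition of the edge set of the complete geometric graph induced by `A`
into `m` (possibly empty) classes. -/
def IsPartitionInto (A : Set Pt) (m : ℕ) (F : Fin m → Set (Sym2 Pt)) : Prop :=
  (⋃ i, F i) = edges A ∧ Pairwise (Function.onFun Disjoint F)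

/-- A star: a set of edges all sharing a common endpoint. -/
def IsStar (E : Set (Sym2 Pt)) : Prop := ∃ a : Pt, ∀ e ∈ E, a ∈ e

/-- A star forest consisting of at most two stars: a union of two stars that are
vertex-disjoint. -/
def AtMostTwoStarForest (E : Set (Sym2 Pt)) : Prop :=
  ∃ E₁ E₂ : Set (Sym2 Pt), E = E₁ ∪ E₂ ∧ IsStar E₁ ∧ IsStar E₂ ∧
    ∀ e ∈ E₁, ∀ f ∈ E₂, ∀ v : Pt, v ∈ e → v ∉ f

/-!
Enumerate the clusters as `aₖ, bₖ, cₖ, dₖ` (`k < m`). For each `k` take the three two-star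
forests `aₖ → B₁ ∪ B₄, bₖ → B₃`;  `bₖ → B₂ ∪ B₄, cₖ → B₃ ∪ B₁`;  `dₖ → B₃ ∪ B₄, aₖ → B₂`.
Together they contain every edge, and removing from each forest the edges of the earlier ones
turns this cover into a partition. Each forest is plane because the hull condition provides
separating lines: a line through points of two of `B₁, B₂, B₃` has the third cluster and `B₄`
strictly on one side, and a line through a point of `B₁` and a point of `B₄` separates `B₂`
from `B₃`.
-/

section AffineSign

variable {E : Type*} [AddCommGroup E] [Module ℝ E]

lemma AffineMap.pos_of_mem_openSegment (f : E →ᵃ[ℝ] ℝ) {u x z : E} (hu : 0 < f u)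
    (hx : 0 ≤ f x) (hz : z ∈ openSegment ℝ u x) : 0 < f z := by
  obtain ⟨α, β, hα, hβ, hαβ, rfl⟩ := hz
  rw [Convex.combo_affine_apply hαβ, smul_eq_mul, smul_eq_mul]
  exact add_pos_of_pos_of_nonneg (mul_pos hα hu) (mul_nonneg hβ.le hx)

lemma AffineMap.nonpos_of_mem_openSegment (f : E →ᵃ[ℝ] ℝ) {u x z : E} (hu : f u ≤ 0)
    (hx : f x ≤ 0) (hz : z ∈ openSegment ℝ u x) : f z ≤ 0 := by
  obtain ⟨α, β, hα, hβ, hαβ, rfl⟩ := hz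
  rw [Convex.combo_affine_apply hαβ, smul_eq_mul, smul_eq_mul]
  nlinarith

lemma AffineMap.disjoint_openSegment (f : E →ᵃ[ℝ] ℝ) {u x u' y : E} (hu : 0 < f u)
    (hx : 0 ≤ f x) (hu' : f u' ≤ 0) (hy : f y ≤ 0) :
    Disjoint (openSegment ℝ u x) (openSegment ℝ u' y) :=
  Set.disjoint_left.2 fun _ hz hz' =>
    (f.pos_of_mem_openSegment hu hx hz).not_ge (f.nonpos_of_mem_openSegment hu' hy hz')

lemma AffineMap.mul_nonneg_of_mem_convexHull (f : E →ᵃ[ℝ] ℝ) {x p q w : E} (hp : f p = 0)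
    (hq : f q = 0) (hw : w ∈ convexHull ℝ {x, p, q}) : 0 ≤ f w * f x := by
  have hfw : f w ∈ segment ℝ (f x) 0 := by
    have := Set.mem_image_of_mem f hw
    rwa [f.image_convexHull, Set.image_insert_eq, Set.image_pair, hp, hq,
      Set.pair_eq_singleton, convexHull_pair] at this
  obtain ⟨α, β, hα, -, -, h⟩ := hfw
  rw [← h, smul_eq_mul, smul_zero, add_zero]
  nlinarith [sq_nonneg (f x)]

/-- The line through `a` and `w` meets the segment `[b, c]`. -/
lemma AffineMap.mul_nonpos_of_mem_convexHull (f : E →ᵃ[ℝ] ℝ) {a b c w : E} (ha : f a = 0)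
    (hw : f w = 0) (hwa : w ≠ a) (hmem : w ∈ convexHull ℝ {a, b, c}) : f b * f c ≤ 0 := by
  rw [convexHull_insert (Set.insert_nonempty b {c}), convexHull_pair, mem_convexJoin] at hmem
  obtain ⟨z, hz, hwz⟩ : ∃ z ∈ segment ℝ b c, w ∈ segment ℝ a z := by simpa using hmem
  obtain ⟨t, -, rfl⟩ := (segment_eq_image_lineMap ℝ a z ▸ hwz :)
  have ht : t ≠ 0 := by rintro rfl; exact hwa (AffineMap.lineMap_apply_zero a z)
  have hz0 : f z = 0 := by
    rw [AffineMap.apply_lineMap, ha, AffineMap.lineMap_apply_ring, mul_zero, zero_add] at hw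
    exact (mul_eq_zero.1 hw).resolve_left ht
  have hfz : f z ∈ segment ℝ (f b) (f c) := image_segment ℝ f b c ▸ Set.mem_image_of_mem f hz
  rw [hz0, segment_eq_uIcc, Set.mem_uIcc] at hfz
  rcases hfz with ⟨hb, hc⟩ | ⟨hc, hb⟩
  · exact mul_nonpos_of_nonpos_of_nonneg hb hc
  · exact mul_nonpos_of_nonneg_of_nonpos hb hc

lemma AffineMap.exists_pos_of_mem_convexHull (f : E →ᵃ[ℝ] ℝ) {p q z₀ w₀ : E} {Z W : Set E}
    (hp : f p = 0) (hq : f q = 0) (hz₀ : z₀ ∈ Z) (hw₀ : w₀ ∈ W) (hZ : ∀ z ∈ Z, f z ≠ 0)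
    (hW : ∀ w ∈ W, f w ≠ 0) (hhull : ∀ z ∈ Z, ∀ w ∈ W, w ∈ convexHull ℝ {z, p, q}) :
    ∃ g : E →ᵃ[ℝ] ℝ, g p = 0 ∧ g q = 0 ∧ ∀ x ∈ Z ∪ W, 0 < g x := by
  have key : ∀ z ∈ Z, ∀ w ∈ W, 0 < f w * f z := fun z hz w hw =>
    (f.mul_nonneg_of_mem_convexHull hp hq (hhull z hz w hw)).lt_of_ne
      (mul_ne_zero (hW w hw) (hZ z hz)).symm
  refine ⟨f w₀ • f, by simp [hp], by simp [hq], ?_⟩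
  rintro x (hx | hx) <;> simp only [AffineMap.coe_smul, Pi.smul_apply, smul_eq_mul]
  · exact key x hx w₀ hw₀
  · have h₁ := key z₀ hz₀ x hx
    have h₂ := key z₀ hz₀ w₀ hw₀
    nlinarith [mul_pos h₁ h₂, sq_nonneg (f z₀)]

end AffineSign

/-- Twice the signed area of the triangle `p q x`. -/
def orient (p q : Pt) : Pt →ᵃ[ℝ] ℝ where
  toFun x := (q 0 - p 0) * (x 1 - p 1) - (q 1 - p 1) * (x 0 - p 0)
  linear := (q 0 - p 0) • (EuclideanSpace.proj 1 : Pt →L[ℝ] ℝ).toLinearMap -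
    (q 1 - p 1) • (EuclideanSpace.proj 0 : Pt →L[ℝ] ℝ).toLinearMap
  map_vadd' x v := by simp; ring

lemma orient_apply (p q x : Pt) :
    orient p q x = (q 0 - p 0) * (x 1 - p 1) - (q 1 - p 1) * (x 0 - p 0) := rfl

@[simp] lemma orient_apply_left (p q : Pt) : orient p q p = 0 := by simp [orient_apply]

@[simp] lemma orient_apply_right (p q : Pt) : orient p q q = 0 := by
  simp only [orient_apply]; ring

lemma collinear_of_orient_eq_zero {p q x : Pt} (hpq : p ≠ q) (h : orient p q x = 0) :
    Collinear ℝ ({p, q, x} : Set Pt) := by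
  have hD : (q 0 - p 0) ^ 2 + (q 1 - p 1) ^ 2 ≠ 0 := by
    intro hD
    refine hpq (PiLp.ext fun i => ?_)
    fin_cases i <;> simp <;> nlinarith [sq_nonneg (q 0 - p 0), sq_nonneg (q 1 - p 1)]
  rw [collinear_iff_of_mem (Set.mem_insert p _)]
  refine ⟨q - p, ?_⟩
  simp only [Set.mem_insert_iff, Set.mem_singleton_iff, forall_eq_or_imp, forall_eq]
  refine ⟨⟨0, by simp⟩, ⟨1, by simp⟩, ?_⟩
  -- the coefficient of the orthogonal projection of `x - p` onto `q - p`
  refine ⟨((x 0 - p 0) * (q 0 - p 0) + (x 1 - p 1) * (q 1 - p 1)) /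
    ((q 0 - p 0) ^ 2 + (q 1 - p 1) ^ 2), PiLp.ext fun i => ?_⟩
  simp only [orient_apply] at h
  fin_cases i <;> simp <;> field_simp
  · linear_combination (p 1 - q 1) * h
  · linear_combination (q 0 - p 0) * h

lemma GenPos.orient_ne_zero {A : Set Pt} (hA : GenPos A) {p q x : Pt} (hp : p ∈ A) (hq : q ∈ A)
    (hx : x ∈ A) (hpq : p ≠ q) (hpx : p ≠ x) (hqx : q ≠ x) : orient p q x ≠ 0 :=
  fun h => hA p hp q hq x hx hpq hpx hqx (collinear_of_orient_eq_zero hpq h)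

lemma not_cross_of_mem {e f : Sym2 Pt} {v : Pt} (he : v ∈ e) (hf : v ∈ f) : ¬ Cross e f := by
  rintro ⟨a, b, c, d, rfl, rfl, hac, had, hbc, hbd, -⟩
  rw [Sym2.mem_iff] at he hf
  rcases he with rfl | rfl <;> rcases hf with rfl | rfl <;> contradiction

lemma not_cross_of_disjoint {u x u' y : Pt}
    (h : Disjoint (openSegment ℝ u x) (openSegment ℝ u' y)) : ¬ Cross s(u, x) s(u', y) := by
  have hseg : ∀ {a b c d : Pt}, s(a, b) = s(c, d) → openSegment ℝ a b = openSegment ℝ c d := by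
    intro a b c d he
    rcases Sym2.eq_iff.1 he with ⟨rfl, rfl⟩ | ⟨rfl, rfl⟩
    · rfl
    · exact openSegment_symm ℝ _ _
  rintro ⟨a, b, c, d, he, hf, -, -, -, -, hne⟩
  rw [← hseg he, ← hseg hf] at hne
  exact Set.not_disjoint_iff_nonempty_inter.2 hne h

lemma PlaneEdges.mono {E E' : Set (Sym2 Pt)} (h : PlaneEdges E') (hE : E ⊆ E') :
    PlaneEdges E :=
  fun e he f hf => h e (hE he) f (hE hf)

lemma IsStar.mono {E E' : Set (Sym2 Pt)} (h : IsStar E') (hE : E ⊆ E') : IsStar E :=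
  let ⟨a, ha⟩ := h
  ⟨a, fun e he => ha e (hE he)⟩

lemma AtMostTwoStarForest.mono {E E' : Set (Sym2 Pt)} (h : AtMostTwoStarForest E')
    (hE : E ⊆ E') : AtMostTwoStarForest E := by
  obtain ⟨E₁, E₂, rfl, h₁, h₂, hdisj⟩ := h
  exact ⟨E ∩ E₁, E ∩ E₂, by rw [← Set.inter_union_distrib_left, Set.inter_eq_left.2 hE],
    h₁.mono Set.inter_subset_right, h₂.mono Set.inter_subset_right,
    fun e he f hf => hdisj e he.2 f hf.2⟩

def IsPlaneTwoStarForest (E : Set (Sym2 Pt)) : Prop := PlaneEdges E ∧ AtMostTwoStarForest E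

lemma IsPlaneTwoStarForest.mono {E E' : Set (Sym2 Pt)} (h : IsPlaneTwoStarForest E')
    (hE : E ⊆ E') : IsPlaneTwoStarForest E :=
  ⟨h.1.mono hE, h.2.mono hE⟩

lemma exists_isPartitionInto_of_subset_iUnion {A : Set Pt} {n : ℕ}
    (P : Set (Sym2 Pt) → Prop) (hP : ∀ ⦃E E'⦄, E ⊆ E' → P E' → P E)
    (G : Fin n → Set (Sym2 Pt)) (hcover : edges A ⊆ ⋃ i, G i) (hG : ∀ i, P (G i)) :
    ∃ F, IsPartitionInto A n F ∧ ∀ i, P (F i) :=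
  ⟨disjointed fun i => G i ∩ edges A,
    ⟨by rw [iUnion_disjointed, ← Set.iUnion_inter, Set.inter_eq_right.2 hcover],
      disjoint_disjointed _⟩,
    fun i => hP ((disjointed_subset _ i).trans Set.inter_subset_left) (hG i)⟩

def starEdges (u : Pt) (S : Set Pt) : Set (Sym2 Pt) := (fun x => s(u, x)) '' S

lemma isStar_starEdges (u : Pt) (S : Set Pt) : IsStar (starEdges u S) :=
  ⟨u, by rintro _ ⟨x, -, rfl⟩; exact Sym2.mem_mk_left u x⟩

lemma atMostTwoStarForest_starEdges_union {u₁ u₂ : Pt} {S₁ S₂ : Set Pt}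
    (h : Disjoint (insert u₁ S₁) (insert u₂ S₂)) :
    AtMostTwoStarForest (starEdges u₁ S₁ ∪ starEdges u₂ S₂) := by
  refine ⟨_, _, rfl, isStar_starEdges u₁ S₁, isStar_starEdges u₂ S₂, ?_⟩
  rintro _ ⟨x, hx, rfl⟩ _ ⟨y, hy, rfl⟩ v hv hv'
  have hv₁ : v ∈ insert u₁ S₁ := by
    rcases Sym2.mem_iff.1 hv with rfl | rfl
    exacts [Set.mem_insert _ _, Set.mem_insert_of_mem _ hx]
  have hv₂ : v ∈ insert u₂ S₂ := by
    rcases Sym2.mem_iff.1 hv' with rfl | rfl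
    exacts [Set.mem_insert _ _, Set.mem_insert_of_mem _ hy]
  exact Set.disjoint_left.1 h hv₁ hv₂

lemma planeEdges_starEdges_union {u₁ u₂ : Pt} {S₁ S₂ : Set Pt}
    (hsep : ∀ x ∈ S₁, ∀ y ∈ S₂,
      ∃ f : Pt →ᵃ[ℝ] ℝ, 0 < f u₁ ∧ 0 ≤ f x ∧ f u₂ ≤ 0 ∧ f y ≤ 0) :
    PlaneEdges (starEdges u₁ S₁ ∪ starEdges u₂ S₂) := by
  rintro _ (⟨x, hx, rfl⟩ | ⟨x, hx, rfl⟩) _ (⟨y, hy, rfl⟩ | ⟨y, hy, rfl⟩)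
  · exact not_cross_of_mem (Sym2.mem_mk_left _ _) (Sym2.mem_mk_left _ _)
  · obtain ⟨f, h₁, h₂, h₃, h₄⟩ := hsep x hx y hy
    exact not_cross_of_disjoint (f.disjoint_openSegment h₁ h₂ h₃ h₄)
  · obtain ⟨f, h₁, h₂, h₃, h₄⟩ := hsep y hy x hx
    exact not_cross_of_disjoint (f.disjoint_openSegment h₁ h₂ h₃ h₄).symm
  · exact not_cross_of_mem (Sym2.mem_mk_left _ _) (Sym2.mem_mk_left _ _)

lemma Finset.exists_range_eq_of_card_eq {α : Type*} {s : Finset α} {m : ℕ} (h : s.card = m) :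
    ∃ a : Fin m → α, Set.range a = s :=
  ⟨Subtype.val ∘ (s.equivFinOfCardEq h).symm, by
    rw [(Equiv.surjective _).range_comp, Subtype.range_coe_subtype]; rfl⟩

structure FourClusters (B₁ B₂ B₃ B₄ : Finset Pt) : Prop where
  disjoint₁₂ : Disjoint B₁ B₂
  disjoint₁₃ : Disjoint B₁ B₃
  disjoint₁₄ : Disjoint B₁ B₄
  disjoint₂₃ : Disjoint B₂ B₃
  disjoint₂₄ : Disjoint B₂ B₄
  disjoint₃₄ : Disjoint B₃ B₄
  genPos : GenPos ((B₁ : Set Pt) ∪ ↑B₂ ∪ ↑B₃ ∪ ↑B₄)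
  mem_convexHull : ∀ p₁ ∈ B₁, ∀ p₂ ∈ B₂, ∀ p₃ ∈ B₃, ∀ p₄ ∈ B₄,
    p₄ ∈ convexHull ℝ ({p₁, p₂, p₃} : Set Pt)

def clusterClass {m : ℕ} (B₁ B₂ B₃ B₄ : Finset Pt) (a b c d : Fin m → Pt) :
    Fin 3 × Fin m → Set (Sym2 Pt)
  | (0, k) => starEdges (a k) (↑B₁ ∪ ↑B₄) ∪ starEdges (b k) ↑B₃
  | (1, k) => starEdges (b k) (↑B₂ ∪ ↑B₄) ∪ starEdges (c k) (↑B₃ ∪ ↑B₁)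
  | (2, k) => starEdges (d k) (↑B₃ ∪ ↑B₄) ∪ starEdges (a k) ↑B₂

namespace FourClusters

variable {B₁ B₂ B₃ B₄ : Finset Pt} (hB : FourClusters B₁ B₂ B₃ B₄)
include hB

lemma line₂₃_sameSide {p q a d : Pt} (hp : p ∈ B₂) (hq : q ∈ B₃) (ha : a ∈ B₁) (hd : d ∈ B₄) :
    ∃ g : Pt →ᵃ[ℝ] ℝ, g p = 0 ∧ g q = 0 ∧ ∀ x ∈ (B₁ ∪ B₄ : Set Pt), 0 < g x :=
  (orient p q).exists_pos_of_mem_convexHull (orient_apply_left p q) (orient_apply_right p q) ha hd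
    (fun x hx => hB.genPos.orient_ne_zero (by simp [hp]) (by simp [hq]) (by simp [hx])
      (hB.disjoint₂₃.forall_ne_finset hp hq) (hB.disjoint₁₂.forall_ne_finset hx hp).symm
      (hB.disjoint₁₃.forall_ne_finset hx hq).symm)
    (fun x hx => hB.genPos.orient_ne_zero (by simp [hp]) (by simp [hq]) (by simp [hx])
      (hB.disjoint₂₃.forall_ne_finset hp hq) (hB.disjoint₂₄.forall_ne_finset hp hx)
      (hB.disjoint₃₄.forall_ne_finset hq hx))
    (fun z hz w hw => hB.mem_convexHull z hz p hp q hq w hw)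

lemma line₁₃_sameSide {p q b d : Pt} (hp : p ∈ B₁) (hq : q ∈ B₃) (hb : b ∈ B₂) (hd : d ∈ B₄) :
    ∃ g : Pt →ᵃ[ℝ] ℝ, g p = 0 ∧ g q = 0 ∧ ∀ x ∈ (B₂ ∪ B₄ : Set Pt), 0 < g x :=
  (orient p q).exists_pos_of_mem_convexHull (orient_apply_left p q) (orient_apply_right p q) hb hd
    (fun x hx => hB.genPos.orient_ne_zero (by simp [hp]) (by simp [hq]) (by simp [hx])
      (hB.disjoint₁₃.forall_ne_finset hp hq) (hB.disjoint₁₂.forall_ne_finset hp hx)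
      (hB.disjoint₂₃.forall_ne_finset hx hq).symm)
    (fun x hx => hB.genPos.orient_ne_zero (by simp [hp]) (by simp [hq]) (by simp [hx])
      (hB.disjoint₁₃.forall_ne_finset hp hq) (hB.disjoint₁₄.forall_ne_finset hp hx)
      (hB.disjoint₃₄.forall_ne_finset hq hx))
    (fun z hz w hw => Set.insert_comm z p {q} ▸ hB.mem_convexHull p hp z hz q hq w hw)

lemma line₁₂_sameSide {p q c d : Pt} (hp : p ∈ B₁) (hq : q ∈ B₂) (hc : c ∈ B₃) (hd : d ∈ B₄) :
    ∃ g : Pt →ᵃ[ℝ] ℝ, g p = 0 ∧ g q = 0 ∧ ∀ x ∈ (B₃ ∪ B₄ : Set Pt), 0 < g x :=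
  (orient p q).exists_pos_of_mem_convexHull (orient_apply_left p q) (orient_apply_right p q) hc hd
    (fun x hx => hB.genPos.orient_ne_zero (by simp [hp]) (by simp [hq]) (by simp [hx])
      (hB.disjoint₁₂.forall_ne_finset hp hq) (hB.disjoint₁₃.forall_ne_finset hp hx)
      (hB.disjoint₂₃.forall_ne_finset hq hx))
    (fun x hx => hB.genPos.orient_ne_zero (by simp [hp]) (by simp [hq]) (by simp [hx])
      (hB.disjoint₁₂.forall_ne_finset hp hq) (hB.disjoint₁₄.forall_ne_finset hp hx)
      (hB.disjoint₂₄.forall_ne_finset hq hx))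
    (fun z hz w hw => by
      rw [Set.insert_comm, Set.pair_comm]
      exact hB.mem_convexHull p hp q hq z hz w hw)

lemma line₁₄_separates {a d b c : Pt} (ha : a ∈ B₁) (hd : d ∈ B₄) (hb : b ∈ B₂) (hc : c ∈ B₃) :
    ∃ g : Pt →ᵃ[ℝ] ℝ, g a = 0 ∧ g d = 0 ∧ (∀ x ∈ B₂, 0 < g x) ∧ ∀ x ∈ B₃, g x < 0 := by
  have had : a ≠ d := hB.disjoint₁₄.forall_ne_finset ha hd
  have hne₂ : ∀ x ∈ B₂, orient a d x ≠ 0 := fun x hx =>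
    hB.genPos.orient_ne_zero (by simp [ha]) (by simp [hd]) (by simp [hx]) had
      (hB.disjoint₁₂.forall_ne_finset ha hx) (hB.disjoint₂₄.forall_ne_finset hx hd).symm
  have hne₃ : ∀ x ∈ B₃, orient a d x ≠ 0 := fun x hx =>
    hB.genPos.orient_ne_zero (by simp [ha]) (by simp [hd]) (by simp [hx]) had
      (hB.disjoint₁₃.forall_ne_finset ha hx) (hB.disjoint₃₄.forall_ne_finset hx hd).symm
  have key : ∀ x ∈ B₂, ∀ y ∈ B₃, orient a d x * orient a d y < 0 := fun x hx y hy =>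
    ((orient a d).mul_nonpos_of_mem_convexHull (orient_apply_left a d) (orient_apply_right a d)
      had.symm (hB.mem_convexHull a ha x hx y hy d hd)).lt_of_ne
      (mul_ne_zero (hne₂ x hx) (hne₃ y hy))
  refine ⟨orient a d b • orient a d, by simp, by simp, fun x hx => ?_, fun y hy => ?_⟩ <;>
    simp only [AffineMap.coe_smul, Pi.smul_apply, smul_eq_mul]
  · nlinarith [mul_pos_of_neg_of_neg (key b hb c hc) (key x hx c hc), sq_nonneg (orient a d c)]
  · exact key b hb y hy

lemma exists_separating_line_bc {a b c d x y : Pt} (ha : a ∈ B₁) (hb : b ∈ B₂) (hc : c ∈ B₃)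
    (hd : d ∈ B₄) (hx : x ∈ (B₂ ∪ B₄ : Set Pt)) (hy : y ∈ (B₃ ∪ B₁ : Set Pt)) :
    ∃ f : Pt →ᵃ[ℝ] ℝ, 0 < f b ∧ 0 ≤ f x ∧ f c ≤ 0 ∧ f y ≤ 0 := by
  rcases hy with hy | hy
  · obtain ⟨g, hgx, hg₂, hg₃⟩ : ∃ g : Pt →ᵃ[ℝ] ℝ, 0 ≤ g x ∧
        (∀ x ∈ B₂, 0 < g x) ∧ ∀ x ∈ B₃, g x < 0 := by
      -- when `x ∈ B₄`, take the line through `a` and `x` itself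
      rcases hx with hx | hx
      · obtain ⟨g, -, -, hg₂, hg₃⟩ := hB.line₁₄_separates ha hd hb hc
        exact ⟨g, (hg₂ x hx).le, hg₂, hg₃⟩
      · obtain ⟨g, -, hgx, hg₂, hg₃⟩ := hB.line₁₄_separates ha hx hb hc
        exact ⟨g, hgx.ge, hg₂, hg₃⟩
    exact ⟨g, hg₂ b hb, hgx, (hg₃ c hc).le, (hg₃ y hy).le⟩
  · obtain ⟨g, hgy, hgc, hg⟩ := hB.line₁₃_sameSide hy hc hb hd
    exact ⟨g, hg b (Or.inl hb), (hg x hx).le, hgc.le, hgy.le⟩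

lemma isPlaneTwoStarForest_clusterClass {m : ℕ} {a b c d : Fin m → Pt}
    (ha : ∀ k, a k ∈ B₁) (hb : ∀ k, b k ∈ B₂) (hc : ∀ k, c k ∈ B₃) (hd : ∀ k, d k ∈ B₄)
    (i : Fin 3 × Fin m) :
    IsPlaneTwoStarForest (clusterClass B₁ B₂ B₃ B₄ a b c d i) := by
  obtain ⟨t, k⟩ := i
  fin_cases t
  · refine ⟨planeEdges_starEdges_union fun x hx y hy => ?_,
      atMostTwoStarForest_starEdges_union <| Set.disjoint_of_subset
        (Set.insert_subset (Or.inl (ha k)) subset_rfl)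
        (Set.insert_subset (Or.inl (hb k)) Set.subset_union_right) ?_⟩
    · obtain ⟨g, hgb, hgy, hg⟩ := hB.line₂₃_sameSide (hb k) hy (ha k) (hd k)
      exact ⟨g, hg _ (Or.inl (ha k)), (hg x hx).le, hgb.le, hgy.le⟩
    · simp [Set.disjoint_union_left, Set.disjoint_union_right, hB.disjoint₁₂, hB.disjoint₁₃,
        hB.disjoint₂₄.symm, hB.disjoint₃₄.symm]
  · refine ⟨planeEdges_starEdges_union fun x hx y hy =>
      hB.exists_separating_line_bc (ha k) (hb k) (hc k) (hd k) hx hy,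
      atMostTwoStarForest_starEdges_union <| Set.disjoint_of_subset
        (Set.insert_subset (Or.inl (hb k)) subset_rfl)
        (Set.insert_subset (Or.inl (hc k)) subset_rfl) ?_⟩
    simp [Set.disjoint_union_left, Set.disjoint_union_right, hB.disjoint₂₃, hB.disjoint₁₂.symm,
      hB.disjoint₃₄.symm, hB.disjoint₁₄.symm]
  · refine ⟨planeEdges_starEdges_union fun x hx y hy => ?_,
      atMostTwoStarForest_starEdges_union <| Set.disjoint_of_subset
        (Set.insert_subset (Or.inr (hd k)) subset_rfl)
        (Set.insert_subset (Or.inl (ha k)) Set.subset_union_right) ?_⟩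
    · obtain ⟨g, hga, hgy, hg⟩ := hB.line₁₂_sameSide (ha k) hy (hc k) (hd k)
      exact ⟨g, hg _ (Or.inr (hd k)), (hg x hx).le, hga.le, hgy.le⟩
    · simp [Set.disjoint_union_left, Set.disjoint_union_right, hB.disjoint₁₃.symm,
        hB.disjoint₂₃.symm, hB.disjoint₁₄.symm, hB.disjoint₂₄.symm]

end FourClusters

lemma edges_subset_iUnion_clusterClass {m : ℕ} {B₁ B₂ B₃ B₄ : Finset Pt} {a b c d : Fin m → Pt}
    (ha : ↑B₁ ⊆ Set.range a) (hb : ↑B₂ ⊆ Set.range b) (hc : ↑B₃ ⊆ Set.range c)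
    (hd : ↑B₄ ⊆ Set.range d) :
    edges ((B₁ : Set Pt) ∪ ↑B₂ ∪ ↑B₃ ∪ ↑B₄) ⊆ ⋃ i, clusterClass B₁ B₂ B₃ B₄ a b c d i := by
  set C := ⋃ i, clusterClass B₁ B₂ B₃ B₄ a b c d i
  have from₁ : ∀ u ∈ B₁, ∀ v ∈ (B₁ ∪ B₂ ∪ B₄ : Set Pt), s(u, v) ∈ C := by
    rintro _ hu v ((hv | hv) | hv)
    all_goals obtain ⟨k, rfl⟩ := ha hu
    · exact Set.mem_iUnion.2 ⟨(0, k), Or.inl ⟨v, Or.inl hv, rfl⟩⟩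
    · exact Set.mem_iUnion.2 ⟨(2, k), Or.inr ⟨v, hv, rfl⟩⟩
    · exact Set.mem_iUnion.2 ⟨(0, k), Or.inl ⟨v, Or.inr hv, rfl⟩⟩
  have from₂ : ∀ u ∈ B₂, ∀ v ∈ (B₂ ∪ B₃ ∪ B₄ : Set Pt), s(u, v) ∈ C := by
    rintro _ hu v ((hv | hv) | hv)
    all_goals obtain ⟨k, rfl⟩ := hb hu
    · exact Set.mem_iUnion.2 ⟨(1, k), Or.inl ⟨v, Or.inl hv, rfl⟩⟩
    · exact Set.mem_iUnion.2 ⟨(0, k), Or.inr ⟨v, hv, rfl⟩⟩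
    · exact Set.mem_iUnion.2 ⟨(1, k), Or.inl ⟨v, Or.inr hv, rfl⟩⟩
  have from₃ : ∀ u ∈ B₃, ∀ v ∈ (B₁ ∪ B₃ : Set Pt), s(u, v) ∈ C := by
    rintro _ hu v (hv | hv)
    all_goals obtain ⟨k, rfl⟩ := hc hu
    · exact Set.mem_iUnion.2 ⟨(1, k), Or.inr ⟨v, Or.inr hv, rfl⟩⟩
    · exact Set.mem_iUnion.2 ⟨(1, k), Or.inr ⟨v, Or.inl hv, rfl⟩⟩
  have from₄ : ∀ u ∈ B₄, ∀ v ∈ (B₃ ∪ B₄ : Set Pt), s(u, v) ∈ C := by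
    rintro _ hu v hv
    obtain ⟨k, rfl⟩ := hd hu
    exact Set.mem_iUnion.2 ⟨(2, k), Or.inl ⟨v, hv, rfl⟩⟩
  -- for any two clusters, one lies among the leaf clusters of the other
  rintro _ ⟨u, hu, v, hv, -, rfl⟩
  rcases hu with ((hu | hu) | hu) | hu <;> rcases hv with ((hv | hv) | hv) | hv <;>
    first
    | (apply from₁ u hu v; simp only [Set.mem_union]; tauto)
    | (apply from₂ u hu v; simp only [Set.mem_union]; tauto)
    | (apply from₃ u hu v; simp only [Set.mem_union]; tauto)
    | (apply from₄ u hu v; simp only [Set.mem_union]; tauto)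
    | (rw [Sym2.eq_swap]; apply from₁ v hv u; simp only [Set.mem_union]; tauto)
    | (rw [Sym2.eq_swap]; apply from₂ v hv u; simp only [Set.mem_union]; tauto)
    | (rw [Sym2.eq_swap]; apply from₃ v hv u; simp only [Set.mem_union]; tauto)
    | (rw [Sym2.eq_swap]; apply from₄ v hv u; simp only [Set.mem_union]; tauto)

theorem four_clusters_partition_general (m : ℕ) (B₁ B₂ B₃ B₄ : Finset Pt)
    (h12 : Disjoint B₁ B₂) (h13 : Disjoint B₁ B₃) (h14 : Disjoint B₁ B₄)
    (h23 : Disjoint B₂ B₃) (h24 : Disjoint B₂ B₄) (h34 : Disjoint B₃ B₄)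
    (hc1 : B₁.card = m) (hc2 : B₂.card = m) (hc3 : B₃.card = m) (hc4 : B₄.card = m)
    (hgp : GenPos ((B₁ : Set Pt) ∪ ↑B₂ ∪ ↑B₃ ∪ ↑B₄))
    (hhull : ∀ p₁ ∈ B₁, ∀ p₂ ∈ B₂, ∀ p₃ ∈ B₃, ∀ p₄ ∈ B₄,
      p₄ ∈ convexHull ℝ ({p₁, p₂, p₃} : Set Pt)) :
    ∃ F : Fin (3 * m) → Set (Sym2 Pt),
      IsPartitionInto ((B₁ : Set Pt) ∪ ↑B₂ ∪ ↑B₃ ∪ ↑B₄) (3 * m) F ∧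
      ∀ i, PlaneEdges (F i) ∧ AtMostTwoStarForest (F i) := by
  have hB : FourClusters B₁ B₂ B₃ B₄ := ⟨h12, h13, h14, h23, h24, h34, hgp, hhull⟩
  obtain ⟨a, ha⟩ := Finset.exists_range_eq_of_card_eq hc1
  obtain ⟨b, hb⟩ := Finset.exists_range_eq_of_card_eq hc2
  obtain ⟨c, hc⟩ := Finset.exists_range_eq_of_card_eq hc3
  obtain ⟨d, hd⟩ := Finset.exists_range_eq_of_card_eq hc4
  have hcover := edges_subset_iUnion_clusterClass ha.ge hb.ge hc.ge hd.ge
  rw [← finProdFinEquiv.symm.surjective.iUnion_comp] at hcover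
  exact exists_isPartitionInto_of_subset_iUnion IsPlaneTwoStarForest
    (fun _ _ hE h => h.mono hE) _ hcover fun i =>
      hB.isPlaneTwoStarForest_clusterClass (fun k => ha.le (Set.mem_range_self k))
        (fun k => hb.le (Set.mem_range_self k)) (fun k => hc.le (Set.mem_range_self k))
        (fun k => hd.le (Set.mem_range_self k)) _

/-- If `B = B₁ ∪ B₂ ∪ B₃ ∪ B₄` consists of four disjoint `m`-point sets in general
position such that every `p₄ ∈ B₄` lies in the convex hull of every choice
`p₁ ∈ B₁, p₂ ∈ B₂, p₃ ∈ B₃`, then the complete geometric graph on `B` can be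
partitioned into at most `3m` plane subgraphs, each a plane star forest consisting
of at most two stars. -/
theorem four_clusters_partition (m : ℕ) (hm : 0 < m) (B₁ B₂ B₃ B₄ : Finset Pt)
    (h12 : Disjoint B₁ B₂) (h13 : Disjoint B₁ B₃) (h14 : Disjoint B₁ B₄)
    (h23 : Disjoint B₂ B₃) (h24 : Disjoint B₂ B₄) (h34 : Disjoint B₃ B₄)
    (hc1 : B₁.card = m) (hc2 : B₂.card = m) (hc3 : B₃.card = m) (hc4 : B₄.card = m)
    (hgp : GenPos ((B₁ : Set Pt) ∪ ↑B₂ ∪ ↑B₃ ∪ ↑B₄))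
    (hhull : ∀ p₁ ∈ B₁, ∀ p₂ ∈ B₂, ∀ p₃ ∈ B₃, ∀ p₄ ∈ B₄,
      p₄ ∈ convexHull ℝ ({p₁, p₂, p₃} : Set Pt)) :
    ∃ F : Fin (3 * m) → Set (Sym2 Pt),
      IsPartitionInto ((B₁ : Set Pt) ∪ ↑B₂ ∪ ↑B₃ ∪ ↑B₄) (3 * m) F ∧
      ∀ i, PlaneEdges (F i) ∧ AtMostTwoStarForest (F i) :=
  four_clusters_partition_general m B₁ B₂ B₃ B₄ h12 h13 h14 h23 h24 h34 hc1 hc2 hc3 hc4 hgp hhull
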